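/- arXiv:2010.08217 — 5 statements merged into one kernel-verified Lean document; each statement's English description precedes it below -/
import Mathlib

section
/- Suppose every component F_i of F is strictly convex. If x ∈ ℝⁿ is Pareto stationary for the multiobjective problem min F(x), then x is Pareto optimal. -/
/-! If `x` weakly dominates `x*` and differs from it, strict convexity of each `Fᵢ` on the segment
from `x*` to `x` puts `Fᵢ` at the midpoint strictly below `Fᵢ x*`; the chord through these two
points then bounds every forward difference quotient at `x*` in the direction `x - x*` by a
negative constant (where `Fᵢ x* = ⊤` the quotients are `⊥`), so every directional derivative
there is negative, against stationarity. -/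

open Filter Topology

noncomputable section

/-- Convexity for extended-real-valued functions. -/
def ERealConvexOn {E : Type*} [AddCommGroup E] [Module ℝ E] (g : E → EReal) : Prop :=
  ∀ x y : E, ∀ a b : ℝ, 0 ≤ a → 0 ≤ b → a + b = 1 →
    g (a • x + b • y) ≤ (a : EReal) * g x + (b : EReal) * g y

/-- Directional derivative (the limit, encoded by `liminf`, of forward difference quotients). -/
def dirDeriv {E : Type*} [NormedAddCommGroup E] [NormedSpace ℝ E]
    (φ : E → EReal) (x d : E) : EReal :=
  Filter.liminf (fun t : ℝ => ((t⁻¹ : ℝ) : EReal) * (φ (x + t • d) - φ x)) (𝓝[>] (0 : ℝ))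

/-- Strict convexity for extended-real-valued functions (strict on the effective domain). -/
def ERealStrictConvexOn {E : Type*} [AddCommGroup E] [Module ℝ E] (g : E → EReal) : Prop :=
  ∀ x y : E, x ≠ y → g x ≠ ⊤ → g y ≠ ⊤ → ∀ a b : ℝ, 0 < a → 0 < b → a + b = 1 →
    g (a • x + b • y) < (a : EReal) * g x + (b : EReal) * g y

section AddCommGroup

variable {E : Type*} [AddCommGroup E] [Module ℝ E] {φ : E → EReal}

theorem ERealStrictConvexOn.ne_bot (hφ : ERealStrictConvexOn φ) {x y : E} (hxy : x ≠ y)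
    (hy : φ y ≠ ⊤) : φ x ≠ ⊥ := by
  intro hx
  have h := hφ x y hxy (hx ▸ bot_ne_top) hy 2⁻¹ 2⁻¹ (by norm_num) (by norm_num) (by ring)
  rw [hx, EReal.mul_bot_of_pos (by norm_num), EReal.bot_add] at h
  exact not_lt_bot h

theorem ERealStrictConvexOn.apply_add_smul_lt (hφ : ERealStrictConvexOn φ) {x d : E}
    (hd : d ≠ 0) {s t A B : ℝ} (ht : 0 < t) (hts : t < s) (hA : φ x = A)
    (hB : φ (x + s • d) = B) :
    φ (x + t • d) < (A + t / s * (B - A) : ℝ) := by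
  have hs : 0 < s := ht.trans hts
  have hne : x ≠ x + s • d := by simp [hd, hs.ne']
  have h := hφ x (x + s • d) hne (by simp [hA]) (by simp [hB]) (1 - t / s) (t / s)
    (by rw [sub_pos, div_lt_one hs]; exact hts) (by positivity) (by ring)
  have hpt : (1 - t / s) • x + (t / s) • (x + s • d) = x + t • d := by
    rw [smul_add, smul_smul, div_mul_cancel₀ t hs.ne']; module
  rw [hpt, hA, hB] at h
  convert h using 1
  norm_cast
  ring

end AddCommGroup

section Normed

variable {E : Type*} [NormedAddCommGroup E] [NormedSpace ℝ E] {φ : E → EReal}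

theorem dirDeriv_eq_bot_of_eq_top {x : E} (hx : φ x = ⊤) (d : E) : dirDeriv φ x d = ⊥ := by
  refine le_bot_iff.mp (Filter.liminf_le_of_frequently_le' ?_)
  refine (eventually_of_mem self_mem_nhdsWithin fun t ht => ?_).frequently
  rw [hx, EReal.sub_top, EReal.mul_bot_of_pos (by exact_mod_cast inv_pos.mpr (Set.mem_Ioi.mp ht))]

theorem ERealStrictConvexOn.dirDeriv_le (hφ : ERealStrictConvexOn φ) {x d : E} (hd : d ≠ 0)
    {s A B : ℝ} (hs : 0 < s) (hA : φ x = A) (hB : φ (x + s • d) = B) :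
    dirDeriv φ x d ≤ ((B - A) / s : ℝ) := by
  refine Filter.liminf_le_of_frequently_le' ?_
  refine (eventually_of_mem (Ioo_mem_nhdsGT hs) fun t ⟨ht, hts⟩ => ?_).frequently
  calc ((t⁻¹ : ℝ) : EReal) * (φ (x + t • d) - φ x)
      ≤ ((t⁻¹ : ℝ) : EReal) * ((A + t / s * (B - A) - A : ℝ) : EReal) := by
        refine mul_le_mul_of_nonneg_left ?_ (by exact_mod_cast (inv_pos.mpr ht).le)
        rw [hA, EReal.coe_sub]
        exact EReal.sub_le_sub (hφ.apply_add_smul_lt hd ht hts hA hB).le le_rfl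
    _ = ((B - A) / s : ℝ) := by
        rw [← EReal.coe_mul]
        congr 1
        field_simp
        ring

theorem ERealStrictConvexOn.dirDeriv_sub_neg (hφ : ERealStrictConvexOn φ) {x y : E} (hxy : x ≠ y)
    (hle : φ y ≤ φ x) :
    dirDeriv φ x (y - x) < 0 := by
  by_cases hxtop : φ x = ⊤
  · rw [dirDeriv_eq_bot_of_eq_top hxtop]
    exact EReal.bot_lt_zero
  have hytop : φ y ≠ ⊤ := ne_top_of_le_ne_top hxtop hle
  have hd : y - x ≠ 0 := sub_ne_zero.mpr hxy.symm
  set A := (φ x).toReal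
  set B := (φ y).toReal
  have hA : φ x = A := (EReal.coe_toReal hxtop (hφ.ne_bot hxy hytop)).symm
  have hB : φ y = B := (EReal.coe_toReal hytop (hφ.ne_bot hxy.symm hxtop)).symm
  have hBA : B ≤ A := by exact_mod_cast hB ▸ hA ▸ hle
  -- the endpoint `y` may tie with `x`, so the slope is taken towards the midpoint `z`
  set z := x + (2⁻¹ : ℝ) • (y - x)
  have hz_lt : φ z < (A + 2⁻¹ * (B - A) : ℝ) := by
    simpa only [div_one] using
      hφ.apply_add_smul_lt hd (s := 1) (t := 2⁻¹) (by norm_num) (by norm_num) hA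
        (by rwa [one_smul, add_sub_cancel])
  have hxz : x ≠ z := by simpa [z] using hd
  set C := (φ z).toReal
  have hC : φ z = C := (EReal.coe_toReal hz_lt.ne_top (hφ.ne_bot hxz.symm hxtop)).symm
  have hCA : C < A := by
    have : C < A + 2⁻¹ * (B - A) := by exact_mod_cast hC ▸ hz_lt
    linarith
  calc dirDeriv φ x (y - x) ≤ ((C - A) / 2⁻¹ : ℝ) := hφ.dirDeriv_le hd (by norm_num) hA hC
    _ < 0 := by exact_mod_cast div_neg_of_neg_of_pos (sub_neg.mpr hCA) (by norm_num)

end Normed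

theorem pareto_stationary_implies_pareto_optimal_of_strictly_convex_general
    {n m : ℕ}
    (F : Fin m → EuclideanSpace ℝ (Fin n) → EReal)
    (hF_strict : ∀ i, ERealStrictConvexOn (F i))
    (xstar : EuclideanSpace ℝ (Fin n))
    (hstat : ∀ d : EuclideanSpace ℝ (Fin n), (0 : EReal) ≤ ⨆ i, dirDeriv (F i) xstar d) :
    ¬ ∃ x, (∀ i, F i x ≤ F i xstar) ∧ (∃ j, F j x ≠ F j xstar) := by
  rintro ⟨x, hle, j, hj⟩
  have hne : xstar ≠ x := fun h => hj (h ▸ rfl)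
  have : Nonempty (Fin m) := ⟨j⟩
  obtain ⟨i, hi⟩ := exists_eq_ciSup_of_finite (f := fun i => dirDeriv (F i) xstar (x - xstar))
  exact (hstat (x - xstar)).not_gt (hi ▸ (hF_strict i).dirDeriv_sub_neg hne (hle i))

/-- If every component Fᵢ of F is strictly convex and x ∈ ℝⁿ is Pareto stationary for min F(x),
then x is Pareto optimal. -/
theorem pareto_stationary_implies_pareto_optimal_of_strictly_convex
    {n m : ℕ} (hm : 0 < m)
    (f : Fin m → EuclideanSpace ℝ (Fin n) → ℝ)
    (g : Fin m → EuclideanSpace ℝ (Fin n) → EReal)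
    (hf : ∀ i, ContDiff ℝ 1 (f i))
    (hg_lsc : ∀ i, LowerSemicontinuous (g i))
    (hg_ne_bot : ∀ i x, g i x ≠ ⊥)
    (hg_proper : ∀ i, ∃ x, g i x ≠ ⊤)
    (hg_convex : ∀ i, ERealConvexOn (g i))
    (F : Fin m → EuclideanSpace ℝ (Fin n) → EReal)
    (hF : ∀ i x, F i x = (f i x : EReal) + g i x)
    (hF_strict : ∀ i, ERealStrictConvexOn (F i))
    (xstar : EuclideanSpace ℝ (Fin n))
    (hstat : ∀ d : EuclideanSpace ℝ (Fin n), (0 : EReal) ≤ ⨆ i, dirDeriv (F i) xstar d) :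
    ¬ ∃ x, (∀ i, F i x ≤ F i xstar) ∧ (∃ j, F j x ≠ F j xstar) :=
  pareto_stationary_implies_pareto_optimal_of_strictly_convex_general F hF_strict xstar hstat
end
end

section
/- Suppose each ∇f_i is Lipschitz continuous with constant L_i > 0 and let L := max_{i∈{1,…,m}} L_i. Then u_0(x) ≥ w_L(x) for all x ∈ ℝⁿ. -/
/-!
For every `y` and `i`, the descent lemma
`f_i y ≤ f_i x + ⟪∇f_i x, y - x⟫ + (L_i / 2) ‖y - x‖²`, together with `L_i ≤ L`, bounds the
`(y, i)` term of `w_L x` by `F_i x - F_i y`; taking the infimum over `i` and the supremum over `y`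
gives the claim. The descent lemma holds because
`t ↦ f (x + t(y - x)) - t ⟪∇f x, y - x⟫ - (K / 2) t² ‖y - x‖²` has nonpositive derivative
on `[0, 1]` when `∇f` is `K`-Lipschitz.
-/

open Filter Topology

noncomputable section

/-- Strong convexity (modulus σ) for extended-real-valued functions. -/
def ERealStrongConvexOn {E : Type*} [NormedAddCommGroup E] [NormedSpace ℝ E]
    (σ : ℝ) (g : E → EReal) : Prop :=
  ∀ x y : E, ∀ a b : ℝ, 0 ≤ a → 0 ≤ b → a + b = 1 →
    g (a • x + b • y) + ((σ / 2 * (a * b) * ‖x - y‖ ^ 2 : ℝ) : EReal)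
      ≤ (a : EReal) * g x + (b : EReal) * g y

/-- The merit function u₀. -/
def u0 {n m : ℕ} (F : Fin m → EuclideanSpace ℝ (Fin n) → EReal)
    (x : EuclideanSpace ℝ (Fin n)) : EReal :=
  ⨆ y : EuclideanSpace ℝ (Fin n), ⨅ i, (F i x - F i y)

/-- The regularized merit function w_ℓ. -/
def wfun {n m : ℕ} (f : Fin m → EuclideanSpace ℝ (Fin n) → ℝ)
    (g : Fin m → EuclideanSpace ℝ (Fin n) → EReal) (ℓ : ℝ)
    (x : EuclideanSpace ℝ (Fin n)) : EReal :=
  ⨆ y : EuclideanSpace ℝ (Fin n), ⨅ i,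
    (((inner ℝ (gradient (f i) x) (x - y) : ℝ)) : EReal) + (g i x - g i y)
      - ((ℓ / 2 * ‖x - y‖ ^ 2 : ℝ) : EReal)

/-- The mapping ψ_x. -/
def psi {n m : ℕ} (f : Fin m → EuclideanSpace ℝ (Fin n) → ℝ)
    (g : Fin m → EuclideanSpace ℝ (Fin n) → EReal)
    (x d : EuclideanSpace ℝ (Fin n)) : EReal :=
  ⨆ i, ((inner ℝ (gradient (f i) x) d : ℝ) : EReal) + (g i (x + d) - g i x)

open scoped NNReal InnerProductSpace

/-- No finiteness is needed: `⊥` absorbs `EReal` addition (even `⊤ + ⊥ = ⊥`), so an infinite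
`a` or `b` makes one side trivial. -/
theorem EReal.coe_add_sub_sub_coe_le_coe_add_sub_coe_add {p q r s : ℝ} (a b : EReal)
    (h : p - q ≤ r - s) : (p : EReal) + (a - b) - q ≤ (r + a) - (s + b) := by
  induction a using EReal.rec <;> induction b using EReal.rec
  case coe.coe => norm_cast; linarith
  all_goals simp [← EReal.coe_add]

section Descent

variable {E : Type*} [NormedAddCommGroup E] [InnerProductSpace ℝ E]

theorem LipschitzWith.inner_sub_le_add_smul {G : E → E} {K : ℝ≥0} (hG : LipschitzWith K G)
    (x d : E) {t : ℝ} (ht : 0 ≤ t) : ⟪G (x + t • d) - G x, d⟫_ℝ ≤ K * t * ‖d‖ ^ 2 :=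
  calc ⟪G (x + t • d) - G x, d⟫_ℝ ≤ ‖G (x + t • d) - G x‖ * ‖d‖ := real_inner_le_norm _ _
    _ ≤ K * ‖t • d‖ * ‖d‖ := by
      gcongr
      simpa [dist_eq_norm] using hG.dist_le_mul (x + t • d) x
    _ = K * t * ‖d‖ ^ 2 := by rw [norm_smul, Real.norm_of_nonneg ht]; ring

variable [CompleteSpace E] {f : E → ℝ}

theorem Differentiable.hasDerivAt_add_smul (hf : Differentiable ℝ f) (x d : E) (t : ℝ) :
    HasDerivAt (fun t : ℝ => f (x + t • d)) ⟪gradient f (x + t • d), d⟫_ℝ t := by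
  have hline : HasDerivAt (fun t : ℝ => x + t • d) d t := by
    simpa using ((hasDerivAt_id t).smul_const d).const_add x
  simpa [Function.comp_def] using
    (hf (x + t • d)).hasGradientAt.hasFDerivAt.comp_hasDerivAt t hline

theorem Differentiable.le_add_inner_gradient_add_sq {K : ℝ≥0} (hf : Differentiable ℝ f)
    (hlip : LipschitzWith K (gradient f)) (x y : E) :
    f y ≤ f x + ⟪gradient f x, y - x⟫_ℝ + K / 2 * ‖y - x‖ ^ 2 := by
  set d := y - x
  set φ : ℝ → ℝ := fun t => f (x + t • d) - t * ⟪gradient f x, d⟫_ℝ - K / 2 * ‖d‖ ^ 2 * t ^ 2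
  have hφ : ∀ t, HasDerivAt φ
      (⟪gradient f (x + t • d) - gradient f x, d⟫_ℝ - K * t * ‖d‖ ^ 2) t := fun t => by
    refine (((hf.hasDerivAt_add_smul x d t).sub ((hasDerivAt_id t).mul_const _)).sub
      ((hasDerivAt_pow 2 t).const_mul _)).congr_deriv ?_
    rw [inner_sub_left]; ring
  have hanti : AntitoneOn φ (Set.Icc 0 1) := by
    refine antitoneOn_of_hasDerivWithinAt_nonpos (convex_Icc 0 1)
      (fun t _ => (hφ t).continuousAt.continuousWithinAt) (fun t _ => (hφ t).hasDerivWithinAt)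
      fun t ht => ?_
    rw [interior_Icc] at ht
    exact sub_nonpos.2 (hlip.inner_sub_le_add_smul x d ht.1.le)
  have hφ_le : φ 1 ≤ φ 0 := hanti (by simp) (by simp) zero_le_one
  simp only [φ, d, one_smul, zero_smul, add_zero, add_sub_cancel] at hφ_le
  linarith

end Descent

theorem u0_ge_wL_general
    {n m : ℕ}
    (f : Fin m → EuclideanSpace ℝ (Fin n) → ℝ)
    (g : Fin m → EuclideanSpace ℝ (Fin n) → EReal)
    (hf : ∀ i, ContDiff ℝ 1 (f i))
    (F : Fin m → EuclideanSpace ℝ (Fin n) → EReal)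
    (hF : ∀ i x, F i x = (f i x : EReal) + g i x)
    (Li : Fin m → ℝ) (hLi : ∀ i, 0 < Li i)
    (hlip : ∀ i, LipschitzWith (Li i).toNNReal (gradient (f i)))
    (L : ℝ) (hL : IsGreatest (Set.range Li) L) :
    ∀ x, wfun f g L x ≤ u0 F x := by
  intro x
  refine iSup_mono fun y => iInf_mono fun i => ?_
  rw [hF, hF]
  refine EReal.coe_add_sub_sub_coe_le_coe_add_sub_coe_add _ _ ?_
  have hdesc := ((hf i).differentiable one_ne_zero).le_add_inner_gradient_add_sq (hlip i) x y
  rw [Real.coe_toNNReal _ (hLi i).le] at hdesc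
  have hquad : Li i / 2 * ‖y - x‖ ^ 2 ≤ L / 2 * ‖y - x‖ ^ 2 := by
    gcongr; exact hL.2 ⟨i, rfl⟩
  rw [← neg_sub y x, inner_neg_right, norm_neg]
  linarith

/-- If each ∇fᵢ is Lipschitz continuous with constant Lᵢ > 0 and L := maxᵢ Lᵢ,
then u₀(x) ≥ w_L(x) for all x. -/
theorem u0_ge_wL
    {n m : ℕ} (hm : 0 < m)
    (f : Fin m → EuclideanSpace ℝ (Fin n) → ℝ)
    (g : Fin m → EuclideanSpace ℝ (Fin n) → EReal)
    (hf : ∀ i, ContDiff ℝ 1 (f i))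
    (hg_lsc : ∀ i, LowerSemicontinuous (g i))
    (hg_ne_bot : ∀ i x, g i x ≠ ⊥)
    (hg_proper : ∀ i, ∃ x, g i x ≠ ⊤)
    (hg_convex : ∀ i, ERealConvexOn (g i))
    (F : Fin m → EuclideanSpace ℝ (Fin n) → EReal)
    (hF : ∀ i x, F i x = (f i x : EReal) + g i x)
    (Li : Fin m → ℝ) (hLi : ∀ i, 0 < Li i)
    (hlip : ∀ i, LipschitzWith (Li i).toNNReal (gradient (f i)))
    (L : ℝ) (hL : IsGreatest (Set.range Li) L) :
    ∀ x, wfun f g L x ≤ u0 F x :=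
  u0_ge_wL_general f g hf F hF Li hLi hlip L hL
end
end

section
/- Assume each f_i is strongly convex with modulus μ_i > 0 and let μ := min_{i∈{1,…,m}} μ_i. Then u_0(x) ≤ w_μ(x) for all x ∈ ℝⁿ. -/
open Filter Topology

noncomputable section

/-! Strong convexity of `f i` gives the first-order bound
`f i x - f i y ≤ ⟪∇ f i x, x - y⟫ - μ / 2 * ‖x - y‖ ^ 2`, since `μ ≤ μ i`.
Adding `g i x - g i y` to both sides (in `EReal`) and taking the minimum over `i` and the
supremum over `y` compares `u0` with `wfun` termwise. -/

theorem StrongConvexOn.apply_add_le_of_hasFDerivAt {E : Type*} [NormedAddCommGroup E]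
    [NormedSpace ℝ E] {s : Set E} {m : ℝ} {f : E → ℝ} {f' : E →L[ℝ] ℝ} {x y : E}
    (hf : StrongConvexOn s m f) (hx : x ∈ s) (hy : y ∈ s) (hf' : HasFDerivAt f f' x) :
    f x + f' (y - x) + m / 2 * ‖x - y‖ ^ 2 ≤ f y := by
  -- On the segment `x + t • (y - x)`, strong convexity bounds the difference quotient at `0`
  -- by `f y - f x - (1 - t) * c`; let `t → 0⁺`.
  set c := m / 2 * ‖x - y‖ ^ 2
  have hslope : Tendsto (fun t : ℝ => t⁻¹ * (f (x + t • (y - x)) - f x)) (𝓝[>] 0)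
      (𝓝 (f' (y - x))) := by
    simpa using (hf'.hasLineDerivAt (y - x)).tendsto_slope_zero_right
  have hbound : Tendsto (fun t : ℝ => f y - f x - (1 - t) * c) (𝓝[>] 0)
      (𝓝 (f y - f x - c)) := by
    have : Continuous (fun t : ℝ => f y - f x - (1 - t) * c) := by fun_prop
    simpa using this.continuousWithinAt (s := Set.Ioi 0) (x := 0) |>.tendsto
  have hquot : ∀ t ∈ Set.Ioo (0 : ℝ) 1,
      t⁻¹ * (f (x + t • (y - x)) - f x) ≤ f y - f x - (1 - t) * c := by
    rintro t ⟨ht0, ht1⟩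
    have h := hf.2 hx hy (sub_nonneg.mpr ht1.le) ht0.le (sub_add_cancel 1 t)
    rw [show (1 - t) • x + t • y = x + t • (y - x) by module, smul_eq_mul, smul_eq_mul] at h
    rw [inv_mul_le_iff₀ ht0]
    linear_combination h
  have key : f' (y - x) ≤ f y - f x - c :=
    le_of_tendsto_of_tendsto hslope hbound
      (eventually_of_mem (Ioo_mem_nhdsGT one_pos) hquot)
  linarith

theorem StrongConvexOn.sub_le_inner_gradient_sub {E : Type*} [NormedAddCommGroup E]
    [InnerProductSpace ℝ E] [CompleteSpace E] {s : Set E} {m : ℝ} {f : E → ℝ} {x y : E}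
    (hf : StrongConvexOn s m f) (hx : x ∈ s) (hy : y ∈ s) (hfx : DifferentiableAt ℝ f x) :
    f x - f y ≤ inner ℝ (gradient f x) (x - y) - m / 2 * ‖x - y‖ ^ 2 := by
  have h := hf.apply_add_le_of_hasFDerivAt hx hy
    (hasGradientAt_iff_hasFDerivAt.mp hfx.hasGradientAt)
  rw [InnerProductSpace.toDual_apply_apply, ← neg_sub x y, inner_neg_right] at h
  linarith

theorem EReal.coe_add_sub_coe_add_le {a b c d : ℝ} (h : a - b ≤ c - d) (u v : EReal) :
    (a + u) - (b + v) ≤ c + (u - v) - d := by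
  induction u using EReal.rec <;> induction v using EReal.rec
  case coe.coe u v => exact_mod_cast (by linarith : a + u - (b + v) ≤ c + (u - v) - d)
  all_goals simp

theorem u0_le_w_mu_general
    {n m : ℕ}
    (f : Fin m → EuclideanSpace ℝ (Fin n) → ℝ)
    (g : Fin m → EuclideanSpace ℝ (Fin n) → EReal)
    (hf : ∀ i, ContDiff ℝ 1 (f i))
    (F : Fin m → EuclideanSpace ℝ (Fin n) → EReal)
    (hF : ∀ i x, F i x = (f i x : EReal) + g i x)
    (μi : Fin m → ℝ)
    (hsc : ∀ i, StrongConvexOn Set.univ (μi i) (f i))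
    (μ : ℝ) (hμ : IsLeast (Set.range μi) μ) :
    ∀ x, u0 F x ≤ wfun f g μ x := by
  intro x
  refine iSup_le fun y => le_iSup_of_le y (iInf_mono fun i => ?_)
  have hfirst_order : f i x - f i y ≤ inner ℝ (gradient (f i) x) (x - y) - μ / 2 * ‖x - y‖ ^ 2 :=
    ((hsc i).mono (hμ.2 ⟨i, rfl⟩)).sub_le_inner_gradient_sub trivial trivial
      ((hf i).differentiable one_ne_zero x)
  rw [hF i x, hF i y]
  exact EReal.coe_add_sub_coe_add_le hfirst_order (g i x) (g i y)

/-- If each fᵢ is strongly convex with modulus μᵢ > 0 and μ := minᵢ μᵢ,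
then u₀(x) ≤ w_μ(x) for all x. -/
theorem u0_le_w_mu
    {n m : ℕ} (hm : 0 < m)
    (f : Fin m → EuclideanSpace ℝ (Fin n) → ℝ)
    (g : Fin m → EuclideanSpace ℝ (Fin n) → EReal)
    (hf : ∀ i, ContDiff ℝ 1 (f i))
    (hg_lsc : ∀ i, LowerSemicontinuous (g i))
    (hg_ne_bot : ∀ i x, g i x ≠ ⊥)
    (hg_proper : ∀ i, ∃ x, g i x ≠ ⊤)
    (hg_convex : ∀ i, ERealConvexOn (g i))
    (F : Fin m → EuclideanSpace ℝ (Fin n) → EReal)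
    (hF : ∀ i x, F i x = (f i x : EReal) + g i x)
    (μi : Fin m → ℝ) (hμi : ∀ i, 0 < μi i)
    (hsc : ∀ i, StrongConvexOn Set.univ (μi i) (f i))
    (μ : ℝ) (hμ : IsLeast (Set.range μi) μ) :
    ∀ x, u0 F x ≤ wfun f g μ x :=
  u0_le_w_mu_general f g hf F hF μi hsc μ hμ
end
end

section
/- Let ℓ > 0 and let d be the minimizer over ℝⁿ of d ↦ ψ_x(d) + (ℓ/2)‖d‖², where ψ_x(d) := max_{i∈{1,…,m}} {∇f_i(x)ᵀd + g_i(x + d) − g_i(x)}. Then ψ_x(d) ≤ −ℓ‖d‖². -/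
/-!
Since each `g i` is convex and never `⊥`, `ψ_x` is convex with `ψ_x(0) ≤ 0`, hence
`ψ_x((1 - t) d) ≤ (1 - t) ψ_x(d)` for `t ∈ [0, 1]`. Testing the minimality of `d`
against `(1 - t) d` gives `t ψ_x(d) ≤ (ℓ / 2) ‖d‖² (t² - 2t)`; divide by `t` and
let `t → 0⁺`.
-/

open Filter Topology

noncomputable section

open Set

theorem ERealConvexOn.map_add_smul_sub_le {E : Type*} [AddCommGroup E] [Module ℝ E]
    {g : E → EReal} (hg : ERealConvexOn g) (hg_bot : ∀ x, g x ≠ ⊥) (x d : E) {s : ℝ}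
    (hs₀ : 0 ≤ s) (hs₁ : s ≤ 1) :
    g (x + s • d) - g x ≤ s * (g (x + d) - g x) := by
  rcases eq_or_ne (g x) ⊤ with hx | hx
  · simp [hx]
  lift g x to ℝ using ⟨hx, hg_bot x⟩ with c hc
  rcases hs₀.eq_or_lt with rfl | hs
  · simp [← hc]
  rcases eq_or_ne (g (x + d)) ⊤ with hxd | hxd
  · rw [hxd, EReal.top_sub_coe, EReal.coe_mul_top_of_pos hs]
    exact le_top
  lift g (x + d) to ℝ using ⟨hxd, hg_bot _⟩ with b hb
  have hconv := hg (x + d) x s (1 - s) hs.le (by linarith) (by ring)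
  rw [show s • (x + d) + (1 - s) • x = x + s • d by module, ← hb, ← hc] at hconv
  calc g (x + s • d) - c ≤ ((s * b + (1 - s) * c : ℝ) : EReal) - c :=
        EReal.sub_le_sub (by exact_mod_cast hconv) le_rfl
    _ = ((s * (b - c) : ℝ) : EReal) := by norm_cast; ring_nf

theorem psi_smul_le_mul {n m : ℕ} (f : Fin m → EuclideanSpace ℝ (Fin n) → ℝ)
    (g : Fin m → EuclideanSpace ℝ (Fin n) → EReal) (hg_ne_bot : ∀ i x, g i x ≠ ⊥)
    (hg_convex : ∀ i, ERealConvexOn (g i)) (x d : EuclideanSpace ℝ (Fin n)) {s : ℝ}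
    (hs₀ : 0 ≤ s) (hs₁ : s ≤ 1) :
    psi f g x (s • d) ≤ s * psi f g x d := by
  have hs : (0 : EReal) ≤ s := EReal.coe_nonneg.2 hs₀
  refine iSup_le fun i => ?_
  calc ((inner ℝ (gradient (f i) x) (s • d) : ℝ) : EReal) + (g i (x + s • d) - g i x)
      ≤ (s : EReal) * (inner ℝ (gradient (f i) x) d : ℝ) + s * (g i (x + d) - g i x) := by
        rw [real_inner_smul_right, EReal.coe_mul]
        exact add_le_add_right ((hg_convex i).map_add_smul_sub_le (hg_ne_bot i) x d hs₀ hs₁) _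
    _ = s * (((inner ℝ (gradient (f i) x) d : ℝ) : EReal) + (g i (x + d) - g i x)) :=
        (EReal.left_distrib_of_nonneg_of_ne_top hs (EReal.coe_ne_top s) _ _).symm
    _ ≤ s * psi f g x d := mul_le_mul_of_nonneg_left (le_iSup_of_le i le_rfl) hs

theorem le_neg_two_mul_of_forall_mem_Ioo {a c : ℝ}
    (h : ∀ t ∈ Ioo (0 : ℝ) 1, a + c ≤ (1 - t) * a + (1 - t) ^ 2 * c) : a ≤ -(2 * c) := by
  have hlim : Tendsto (fun t : ℝ => c * (t - 2)) (𝓝[>] 0) (𝓝 (-(2 * c))) :=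
    ((by fun_prop : Continuous fun t : ℝ => c * (t - 2)).tendsto' 0 _ (by ring)).mono_left
      nhdsWithin_le_nhds
  refine ge_of_tendsto hlim ?_
  filter_upwards [Ioo_mem_nhdsGT one_pos] with t ht
  have hta : t * a ≤ t * (c * (t - 2)) := by linarith [h t ht]
  exact le_of_mul_le_mul_left hta ht.1

theorem le_neg_mul_norm_sq_of_isMinOn {E : Type*} [NormedAddCommGroup E]
    [NormedSpace ℝ E] {φ : E → EReal} {ℓ : ℝ} {d : E}
    (hφ : ∀ s : ℝ, 0 ≤ s → s ≤ 1 → φ (s • d) ≤ s * φ d)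
    (hmin : IsMinOn (fun d' => φ d' + ((ℓ / 2 * ‖d'‖ ^ 2 : ℝ) : EReal)) univ d) :
    φ d ≤ ((-(ℓ * ‖d‖ ^ 2) : ℝ) : EReal) := by
  replace hmin := isMinOn_univ_iff.1 hmin
  have hφ0 : φ 0 ≤ 0 := by simpa using hφ 0 le_rfl zero_le_one
  have hne_top : φ d ≠ ⊤ := by
    intro htop
    have h := (hmin 0).trans (add_le_add_left hφ0 _)
    rw [htop, EReal.top_add_coe, zero_add, top_le_iff] at h
    exact EReal.coe_ne_top _ h
  rcases eq_or_ne (φ d) ⊥ with hbot | hbot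
  · simp [hbot]
  lift φ d to ℝ using ⟨hne_top, hbot⟩ with a ha
  refine EReal.coe_le_coe_iff.2 ?_
  suffices a ≤ -(2 * (ℓ / 2 * ‖d‖ ^ 2)) by linarith
  refine le_neg_two_mul_of_forall_mem_Ioo fun t ht => ?_
  have h := (hmin ((1 - t) • d)).trans (add_le_add_left (hφ (1 - t) (by linarith [ht.2])
    (by linarith [ht.1])) _)
  rw [← EReal.coe_mul, ← EReal.coe_add, ← EReal.coe_add, EReal.coe_le_coe_iff, norm_smul,
    Real.norm_of_nonneg (by linarith [ht.2])] at h
  linarith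

theorem psi_le_neg_ell_norm_sq_general
    {n m : ℕ}
    (f : Fin m → EuclideanSpace ℝ (Fin n) → ℝ)
    (g : Fin m → EuclideanSpace ℝ (Fin n) → EReal)
    (hg_ne_bot : ∀ i x, g i x ≠ ⊥)
    (hg_convex : ∀ i, ERealConvexOn (g i))
    (ℓ : ℝ)
    (x d : EuclideanSpace ℝ (Fin n))
    (hd : ∀ d' : EuclideanSpace ℝ (Fin n),
      psi f g x d + ((ℓ / 2 * ‖d‖ ^ 2 : ℝ) : EReal) ≤
        psi f g x d' + ((ℓ / 2 * ‖d'‖ ^ 2 : ℝ) : EReal)) :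
    psi f g x d ≤ ((-(ℓ * ‖d‖ ^ 2) : ℝ) : EReal) :=
  le_neg_mul_norm_sq_of_isMinOn
    (fun _ hs₀ hs₁ => psi_smul_le_mul f g hg_ne_bot hg_convex x d hs₀ hs₁)
    (isMinOn_univ_iff.2 hd)

/-- If d minimizes d ↦ ψ_x(d) + (ℓ/2)‖d‖² over ℝⁿ, then ψ_x(d) ≤ −ℓ‖d‖². -/
theorem psi_le_neg_ell_norm_sq
    {n m : ℕ} (hm : 0 < m)
    (f : Fin m → EuclideanSpace ℝ (Fin n) → ℝ)
    (g : Fin m → EuclideanSpace ℝ (Fin n) → EReal)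
    (hf : ∀ i, ContDiff ℝ 1 (f i))
    (hg_lsc : ∀ i, LowerSemicontinuous (g i))
    (hg_ne_bot : ∀ i x, g i x ≠ ⊥)
    (hg_proper : ∀ i, ∃ x, g i x ≠ ⊤)
    (hg_convex : ∀ i, ERealConvexOn (g i))
    (ℓ : ℝ) (hℓ : 0 < ℓ)
    (x d : EuclideanSpace ℝ (Fin n))
    (hd : ∀ d' : EuclideanSpace ℝ (Fin n),
      psi f g x d + ((ℓ / 2 * ‖d‖ ^ 2 : ℝ) : EReal) ≤
        psi f g x d' + ((ℓ / 2 * ‖d'‖ ^ 2 : ℝ) : EReal)) :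
    psi f g x d ≤ ((-(ℓ * ‖d‖ ^ 2) : ℝ) : EReal) :=
  psi_le_neg_ell_norm_sq_general f g hg_ne_bot hg_convex ℓ x d hd
end
end

section
/- Let ℓ > L and let {x^k} be generated by the multiobjective proximal gradient method, i.e., x^{k+1} = x^k + d^k with d^k the minimizer of d ↦ ψ_{x^k}(d) + (ℓ/2)‖d‖². Then for every iteration k and every i ∈ {1,…,m}: F_i(x^{k+1}) − F_i(x^k) ≤ −w_ℓ(x^k), and in particular F_i(x^{k+1}) ≤ F_i(x^k). -/
open Filter Topology

noncomputable section

/-!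
By the descent lemma with curvature `Lᵢ ≤ ℓ`, `Fᵢ(x + d) - Fᵢ(x)` is at most the value
`ψ_x(d) + (ℓ/2)‖d‖²` of the proximal subproblem. For each `y`, the minimum over `i` in the
definition of `w_ℓ(x)` is at most minus this value at `d = y - x`, so at the minimizer `dᵏ`
the value is at most `-w_ℓ(xᵏ)`; it is also at most the value `0` at `d = 0`.
-/

open scoped NNReal RealInnerProductSpace
open Set

-- No finiteness assumptions are needed: `EReal` resolves `⊤ + ⊥` to `⊥`.
theorem EReal.coe_add_sub_coe_add (a b : ℝ) (u v : EReal) :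
    ((a : EReal) + u) - ((b : EReal) + v) = ((a - b : ℝ) : EReal) + (u - v) := by
  induction u <;> induction v <;> simp [← EReal.coe_add, ← EReal.coe_sub]
  ring

theorem EReal.coe_add_sub_add_coe_le_neg (a r : ℝ) (u v : EReal) :
    (a : EReal) + (v - u) + r ≤ -(((-a : ℝ) : EReal) + (u - v) - r) := by
  induction u <;> induction v <;> simp [← EReal.coe_add, ← EReal.coe_sub]
  norm_cast; linarith

section DescentLemma

variable {E : Type*} [NormedAddCommGroup E] [InnerProductSpace ℝ E] [CompleteSpace E]
  {f : E → ℝ} {K : ℝ≥0}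

theorem Differentiable.image_add_le_of_lipschitzWith_gradient (hf : Differentiable ℝ f)
    (hlip : LipschitzWith K (gradient f)) (x d : E) :
    f (x + d) ≤ f x + ⟪gradient f x, d⟫ + K / 2 * ‖d‖ ^ 2 := by
  have hline : ∀ t : ℝ,
      HasDerivAt (fun t : ℝ => f (x + t • d)) ⟪gradient f (x + t • d), d⟫ t := by
    intro t
    have hseg : HasDerivAt (fun t : ℝ => x + t • d) d t := by
      simpa using ((hasDerivAt_id t).smul_const d).const_add x
    rw [inner_gradient_left]
    exact (hf (x + t • d)).hasFDerivAt.comp_hasDerivAt t hseg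
  have hquad : ∀ t : ℝ,
      HasDerivAt (fun t : ℝ => f x + t * ⟪gradient f x, d⟫ + K / 2 * t ^ 2 * ‖d‖ ^ 2)
        (⟪gradient f x, d⟫ + K * t * ‖d‖ ^ 2) t := by
    intro t
    refine ((((hasDerivAt_id' t).mul_const ⟪gradient f x, d⟫).const_add (f x)).add
      (((hasDerivAt_pow 2 t).const_mul (K / 2 : ℝ)).mul_const (‖d‖ ^ 2))).congr_deriv ?_
    simp only [Nat.cast_ofNat]; ring
  have hslope : ∀ t ∈ Ico (0 : ℝ) 1,
      ⟪gradient f (x + t • d), d⟫ ≤ ⟪gradient f x, d⟫ + K * t * ‖d‖ ^ 2 := by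
    rintro t ⟨ht, -⟩
    have hgrad : ‖gradient f (x + t • d) - gradient f x‖ ≤ K * (t * ‖d‖) := by
      simpa [← dist_eq_norm, norm_smul, abs_of_nonneg ht] using hlip.dist_le_mul (x + t • d) x
    calc ⟪gradient f (x + t • d), d⟫
        = ⟪gradient f x, d⟫ + ⟪gradient f (x + t • d) - gradient f x, d⟫ := by
          rw [inner_sub_left]; ring
      _ ≤ ⟪gradient f x, d⟫ + ‖gradient f (x + t • d) - gradient f x‖ * ‖d‖ := by
          gcongr; exact real_inner_le_norm _ _
      _ ≤ ⟪gradient f x, d⟫ + K * (t * ‖d‖) * ‖d‖ := by gcongr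
      _ = ⟪gradient f x, d⟫ + K * t * ‖d‖ ^ 2 := by ring
  simpa using image_le_of_deriv_right_le_deriv_boundary (a := 0) (b := 1)
    (fun t _ => (hline t).continuousAt.continuousWithinAt)
    (fun t _ => (hline t).hasDerivWithinAt) (by simp)
    (fun t _ => (hquad t).continuousAt.continuousWithinAt)
    (fun t _ => (hquad t).hasDerivWithinAt) hslope (right_mem_Icc.2 zero_le_one)

end DescentLemma

def proxObjective {n m : ℕ} (f : Fin m → EuclideanSpace ℝ (Fin n) → ℝ)
    (g : Fin m → EuclideanSpace ℝ (Fin n) → EReal) (ℓ : ℝ)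
    (x d : EuclideanSpace ℝ (Fin n)) : EReal :=
  psi f g x d + ((ℓ / 2 * ‖d‖ ^ 2 : ℝ) : EReal)

section ProxObjective

variable {n m : ℕ} (f : Fin m → EuclideanSpace ℝ (Fin n) → ℝ)
  (g : Fin m → EuclideanSpace ℝ (Fin n) → EReal) {ℓ : ℝ}

theorem coe_add_sub_coe_add_le_proxObjective {x d : EuclideanSpace ℝ (Fin n)} {i : Fin m}
    (hdesc : f i (x + d) ≤ f i x + ⟪gradient (f i) x, d⟫ + ℓ / 2 * ‖d‖ ^ 2) :
    ((f i (x + d) : EReal) + g i (x + d)) - ((f i x : EReal) + g i x) ≤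
      proxObjective f g ℓ x d := by
  rw [EReal.coe_add_sub_coe_add]
  calc ((f i (x + d) - f i x : ℝ) : EReal) + (g i (x + d) - g i x)
      ≤ ((⟪gradient (f i) x, d⟫ + ℓ / 2 * ‖d‖ ^ 2 : ℝ) : EReal)
          + (g i (x + d) - g i x) :=
        add_le_add_left (EReal.coe_le_coe_iff.2 (by linarith)) _
    _ = ((⟪gradient (f i) x, d⟫ : ℝ) : EReal) + (g i (x + d) - g i x)
          + ((ℓ / 2 * ‖d‖ ^ 2 : ℝ) : EReal) := by
        rw [EReal.coe_add, add_right_comm]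
    _ ≤ proxObjective f g ℓ x d :=
        add_le_add_left (le_iSup (fun j => ((⟪gradient (f j) x, d⟫ : ℝ) : EReal)
          + (g j (x + d) - g j x)) i) _

theorem proxObjective_zero_nonpos (x : EuclideanSpace ℝ (Fin n)) :
    proxObjective f g ℓ x 0 ≤ 0 := by
  simp only [proxObjective, psi, inner_zero_right, add_zero, norm_zero]
  simpa using iSup_le fun j => EReal.sub_self_le_zero (x := g j x)

theorem iInf_le_neg_proxObjective (x y : EuclideanSpace ℝ (Fin n)) :
    ⨅ j, ((⟪gradient (f j) x, x - y⟫ : ℝ) : EReal) + (g j x - g j y)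
        - ((ℓ / 2 * ‖x - y‖ ^ 2 : ℝ) : EReal) ≤
      -proxObjective f g ℓ x (y - x) := by
  refine EReal.le_neg_of_le_neg (EReal.add_le_of_le_sub (iSup_le fun j => ?_))
  rw [EReal.le_sub_iff_add_le (.inl (EReal.coe_ne_bot _)) (.inl (EReal.coe_ne_top _)),
    add_sub_cancel]
  calc ((⟪gradient (f j) x, y - x⟫ : ℝ) : EReal) + (g j y - g j x)
        + ((ℓ / 2 * ‖y - x‖ ^ 2 : ℝ) : EReal)
      ≤ -(((-⟪gradient (f j) x, y - x⟫ : ℝ) : EReal) + (g j x - g j y)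
          - ((ℓ / 2 * ‖y - x‖ ^ 2 : ℝ) : EReal)) :=
        EReal.coe_add_sub_add_coe_le_neg _ _ _ _
    _ = -(((⟪gradient (f j) x, x - y⟫ : ℝ) : EReal) + (g j x - g j y)
          - ((ℓ / 2 * ‖x - y‖ ^ 2 : ℝ) : EReal)) := by
        rw [← neg_sub y x, inner_neg_right, norm_neg]
    _ ≤ _ := EReal.neg_le_neg_iff.2 (iInf_le _ j)

theorem wfun_le_neg_proxObjective_of_forall_le {x d : EuclideanSpace ℝ (Fin n)}
    (hd : ∀ d', proxObjective f g ℓ x d ≤ proxObjective f g ℓ x d') :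
    wfun f g ℓ x ≤ -proxObjective f g ℓ x d :=
  iSup_le fun y => (iInf_le_neg_proxObjective f g x y).trans (EReal.neg_le_neg_iff.2 (hd _))

end ProxObjective

theorem proximal_gradient_sufficient_decrease_general
    {n m : ℕ}
    (f : Fin m → EuclideanSpace ℝ (Fin n) → ℝ)
    (g : Fin m → EuclideanSpace ℝ (Fin n) → EReal)
    (hf : ∀ i, ContDiff ℝ 1 (f i))
    (F : Fin m → EuclideanSpace ℝ (Fin n) → EReal)
    (hF : ∀ i x, F i x = (f i x : EReal) + g i x)
    (Li : Fin m → ℝ) (hLi : ∀ i, 0 < Li i)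
    (hlip : ∀ i, LipschitzWith (Li i).toNNReal (gradient (f i)))
    (L : ℝ) (hL : IsGreatest (Set.range Li) L)
    (ℓ : ℝ) (hℓ : L < ℓ)
    (x d : ℕ → EuclideanSpace ℝ (Fin n))
    (hmin : ∀ (k : ℕ) (d' : EuclideanSpace ℝ (Fin n)),
      psi f g (x k) (d k) + ((ℓ / 2 * ‖d k‖ ^ 2 : ℝ) : EReal) ≤
        psi f g (x k) d' + ((ℓ / 2 * ‖d'‖ ^ 2 : ℝ) : EReal))
    (hstep : ∀ k, x (k + 1) = x k + d k) :
    ∀ (k : ℕ) (i : Fin m),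
      F i (x (k + 1)) - F i (x k) ≤ -(wfun f g ℓ (x k)) ∧
      F i (x (k + 1)) ≤ F i (x k) := by
  intro k i
  have hLi_le : Li i ≤ ℓ := (hL.2 ⟨i, rfl⟩).trans hℓ.le
  have hdesc : f i (x k + d k) ≤
      f i (x k) + ⟪gradient (f i) (x k), d k⟫ + ℓ / 2 * ‖d k‖ ^ 2 := by
    have := ((hf i).differentiable one_ne_zero).image_add_le_of_lipschitzWith_gradient
      (hlip i) (x k) (d k)
    rw [Real.coe_toNNReal _ (hLi i).le] at this
    exact this.trans (by gcongr)
  have hdecrease : F i (x (k + 1)) - F i (x k) ≤ proxObjective f g ℓ (x k) (d k) := by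
    rw [hstep, hF, hF]
    exact coe_add_sub_coe_add_le_proxObjective f g hdesc
  refine ⟨hdecrease.trans (EReal.le_neg_of_le_neg
    (wfun_le_neg_proxObjective_of_forall_le f g (hmin k))), EReal.sub_nonpos.1 ?_⟩
  exact hdecrease.trans ((hmin k 0).trans (proxObjective_zero_nonpos f g (x k)))

/-- For the multiobjective proximal gradient method with ℓ > L, each objective satisfies
Fᵢ(x^{k+1}) − Fᵢ(x^k) ≤ −w_ℓ(x^k), and in particular Fᵢ(x^{k+1}) ≤ Fᵢ(x^k). -/
theorem proximal_gradient_sufficient_decrease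
    {n m : ℕ} (hm : 0 < m)
    (f : Fin m → EuclideanSpace ℝ (Fin n) → ℝ)
    (g : Fin m → EuclideanSpace ℝ (Fin n) → EReal)
    (hf : ∀ i, ContDiff ℝ 1 (f i))
    (hg_lsc : ∀ i, LowerSemicontinuous (g i))
    (hg_ne_bot : ∀ i x, g i x ≠ ⊥)
    (hg_proper : ∀ i, ∃ x, g i x ≠ ⊤)
    (hg_convex : ∀ i, ERealConvexOn (g i))
    (F : Fin m → EuclideanSpace ℝ (Fin n) → EReal)
    (hF : ∀ i x, F i x = (f i x : EReal) + g i x)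
    (Li : Fin m → ℝ) (hLi : ∀ i, 0 < Li i)
    (hlip : ∀ i, LipschitzWith (Li i).toNNReal (gradient (f i)))
    (L : ℝ) (hL : IsGreatest (Set.range Li) L)
    (ℓ : ℝ) (hℓ : L < ℓ)
    (x d : ℕ → EuclideanSpace ℝ (Fin n))
    (hmin : ∀ (k : ℕ) (d' : EuclideanSpace ℝ (Fin n)),
      psi f g (x k) (d k) + ((ℓ / 2 * ‖d k‖ ^ 2 : ℝ) : EReal) ≤
        psi f g (x k) d' + ((ℓ / 2 * ‖d'‖ ^ 2 : ℝ) : EReal))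
    (hstep : ∀ k, x (k + 1) = x k + d k) :
    ∀ (k : ℕ) (i : Fin m),
      F i (x (k + 1)) - F i (x k) ≤ -(wfun f g ℓ (x k)) ∧
      F i (x (k + 1)) ≤ F i (x k) :=
  proximal_gradient_sufficient_decrease_general f g hf F hF Li hLi hlip L hL ℓ hℓ x d hmin hstep
end
end
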